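/- Let U ⊆ ℝ^n be open and let f : U → ℝ^n be Lipschitz continuous on a neighborhood of x ∈ U. Then, identifying f with the set-valued map whose graph is gph f = {(x', f(x')) : x' ∈ U}, one has Sp f(x) = {rge(I, A) : A ∈ ∇̄f(x)} and Sp* f(x) = {rge(I, Aᵀ) : A ∈ ∇̄f(x)}, where rge(I, A) := {(u, Au) : u ∈ ℝ^n}; in particular Sp f(x) ≠ ∅ and f has the SCD property around x. If f is merely continuous, the inclusions Sp f(x) ⊇ {rge(I, A) : A ∈ ∇̄f(x)} and Sp* f(x) ⊇ {rge(I, Aᵀ) : A ∈ ∇̄f(x)} still hold. -/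

import Mathlib

open Filter Topology Metric Set
open scoped InnerProductSpace RealInnerProductSpace ENNReal NNReal

noncomputable section

namespace SCD

abbrev E (n : ℕ) := EuclideanSpace ℝ (Fin n)
abbrev E2 (n : ℕ) := WithLp 2 (E n × E n)

variable {n : ℕ}

def lp2 (n : ℕ) : E2 n ≃ₗ[ℝ] E n × E n := WithLp.linearEquiv 2 ℝ (E n × E n)
def mk2 (u v : E n) : E2 n := (lp2 n).symm (u, v)
def fst2 (z : E2 n) : E n := (lp2 n z).1
def snd2 (z : E2 n) : E n := (lp2 n z).2

instance : FiniteDimensional ℝ (E2 n) := Module.Finite.equiv (lp2 n).symm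

def tcone {H : Type*} [NormedAddCommGroup H] [NormedSpace ℝ H] (A : Set H) (z : H) : Set H :=
  {w | ∃ t : ℕ → ℝ, ∃ wk : ℕ → H, (∀ k, 0 < t k) ∧ Tendsto t atTop (𝓝 0) ∧
      Tendsto wk atTop (𝓝 w) ∧ ∀ k, z + t k • wk k ∈ A}

def gph (F : E n → Set (E n)) : Set (E2 n) := {z | snd2 z ∈ F (fst2 z)}
def projC (L : Submodule ℝ (E2 n)) : E2 n →L[ℝ] E2 n := L.subtypeL.comp L.orthogonalProjectionOnto
def dZ (L₁ L₂ : Submodule ℝ (E2 n)) : ℝ := ‖projC L₁ - projC L₂‖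

def Sneg (n : ℕ) : E2 n ≃ₗ[ℝ] E2 n :=
  (lp2 n).trans (((LinearEquiv.prodComm ℝ (E n) (E n)).trans
    ((LinearEquiv.neg ℝ).prodCongr (LinearEquiv.refl ℝ (E n)))).trans (lp2 n).symm)

def adjS (L : Submodule ℝ (E2 n)) : Submodule ℝ (E2 n) := Lᗮ.map (Sneg n).toLinearMap

/-- `O_F`: the set of points of `gph F` where `F` is graphically smooth of dimension `n`,
i.e. the tangent cone to the graph is an `n`-dimensional linear subspace. -/
def OF (F : E n → Set (E n)) : Set (E2 n) :=
  {z | z ∈ gph F ∧ ∃ L : Submodule ℝ (E2 n),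
    Module.finrank ℝ L = n ∧ (L : Set (E2 n)) = tcone (gph F) z}

/-- The primal generalized derivative `Sp F(x,y)`. -/
def Sp (F : E n → Set (E n)) (z : E2 n) : Set (Submodule ℝ (E2 n)) :=
  {L | Module.finrank ℝ L = n ∧ ∃ (zk : ℕ → E2 n) (Lk : ℕ → Submodule ℝ (E2 n)),
      (∀ k, zk k ∈ gph F ∧ Module.finrank ℝ (Lk k) = n ∧
        ((Lk k : Set (E2 n)) = tcone (gph F) (zk k))) ∧
      Tendsto zk atTop (𝓝 z) ∧ Tendsto (fun k => dZ (Lk k) L) atTop (𝓝 0)}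

/-- The dual generalized derivative `Sp* F(x,y)`. -/
def SpStar (F : E n → Set (E n)) (z : E2 n) : Set (Submodule ℝ (E2 n)) :=
  {L' | ∃ L ∈ Sp F z, L' = adjS L}

/-- `F` has the SCD property at `z ∈ gph F`. -/
def SCDAt (F : E n → Set (E n)) (z : E2 n) : Prop := (Sp F z).Nonempty

/-- `F` has the SCD property around `z ∈ gph F`. -/
def SCDAround (F : E n → Set (E n)) (z : E2 n) : Prop :=
  ∃ δ > (0 : ℝ), ∀ z' ∈ gph F, dist z' z < δ → SCDAt F z'

/-- `Z_n^{reg}`: the subspaces `L ∈ Z_n` such that `(y*, 0) ∈ L` implies `y* = 0`. -/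
def Znreg (n : ℕ) : Set (Submodule ℝ (E2 n)) :=
  {L | Module.finrank ℝ L = n ∧ ∀ y : E n, mk2 y 0 ∈ L → y = 0}

/-- `F` is SCD regular around `z ∈ gph F`. -/
def SCDRegularAround (F : E n → Set (E n)) (z : E2 n) : Prop :=
  SCDAround F z ∧ ∀ L ∈ SpStar F z, L ∈ Znreg n

/-- The set of values `‖y*‖` for `(y*, x*)` in some `L ∈ Sp* F(x,y)` with `‖x*‖ ≤ 1`;
its supremum is the modulus of SCD regularity. -/
def scdregSet (F : E n → Set (E n)) (z : E2 n) : Set ℝ :=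
  {r | ∃ L ∈ SpStar F z, ∃ w : E2 n, w ∈ L ∧ ‖snd2 w‖ ≤ 1 ∧ r = ‖fst2 w‖}

/-- The modulus of SCD regularity `scd reg F(x,y)`. -/
def scdreg (F : E n → Set (E n)) (z : E2 n) : ℝ := sSup (scdregSet F z)

/-- The graph of the outer limiting graphical derivative `D^♯F(x̄,ȳ)`. -/
def DsharpG (F : E n → Set (E n)) (z : E2 n) : Set (E2 n) :=
  {w | ∃ (zk : ℕ → E2 n) (wk : ℕ → E2 n),
    (∀ k, zk k ∈ gph F ∧ wk k ∈ tcone (gph F) (zk k)) ∧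
    Tendsto zk atTop (𝓝 z) ∧ Tendsto wk atTop (𝓝 w)}

/-- The regular (Fréchet) normal cone: the polar of the tangent cone. -/
def regN (A : Set (E2 n)) (z : E2 n) : Set (E2 n) := {w | ∀ v ∈ tcone A z, ⟪w, v⟫_ℝ ≤ 0}

/-- The limiting (Mordukhovich) normal cone. -/
def limN (A : Set (E2 n)) (z : E2 n) : Set (E2 n) :=
  {w | ∃ (zk wk : ℕ → E2 n), (∀ k, zk k ∈ A ∧ wk k ∈ regN A (zk k)) ∧
    Tendsto zk atTop (𝓝 z) ∧ Tendsto wk atTop (𝓝 w)}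

/-- The graph of the limiting coderivative: `(y*, x*)` with `(x*, -y*)` in the limiting
normal cone to the graph. -/
def coderivG (F : E n → Set (E n)) (z : E2 n) : Set (E2 n) :=
  {w | mk2 (snd2 w) (-(fst2 w)) ∈ limN (gph F) z}

/-- The graph of the strict (paratingent) derivative `D_*F(x̄,ȳ)`. -/
def paraconeG (F : E n → Set (E n)) (z : E2 n) : Set (E2 n) :=
  {w | ∃ (t : ℕ → ℝ) (z1 z2 : ℕ → E2 n), (∀ k, 0 < t k) ∧ Tendsto t atTop (𝓝 0) ∧
    (∀ k, z1 k ∈ gph F ∧ z2 k ∈ gph F) ∧ Tendsto z1 atTop (𝓝 z) ∧ Tendsto z2 atTop (𝓝 z) ∧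
    Tendsto (fun k => (t k)⁻¹ • (z2 k - z1 k)) atTop (𝓝 w)}

/-- The B-subdifferential of `f : U → ℝ^n` at `x`. -/
def Bsub (f : E n → E n) (U : Set (E n)) (x : E n) : Set (E n →L[ℝ] E n) :=
  {A | ∃ xk : ℕ → E n, (∀ k, xk k ∈ U ∧ DifferentiableAt ℝ f (xk k)) ∧
    Tendsto xk atTop (𝓝 x) ∧ Tendsto (fun k => fderiv ℝ f (xk k)) atTop (𝓝 A)}

/-- A single-valued map `f` on `U` viewed as a set-valued map. -/
def sv (f : E n → E n) (U : Set (E n)) : E n → Set (E n) := fun x => {y | x ∈ U ∧ y = f x}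

/-- The linear map `u ↦ (u, A u)`. -/
def graphMap (A : E n →L[ℝ] E n) : E n →ₗ[ℝ] E2 n :=
  (lp2 n).symm.toLinearMap.comp (LinearMap.prod LinearMap.id A.toLinearMap)

/-- The subspace `rge(I, A) = {(u, Au) : u ∈ ℝ^n}`. -/
def rgeIA (A : E n →L[ℝ] E n) : Submodule ℝ (E2 n) := LinearMap.range (graphMap A)

/-- The linear map `p ↦ (C p, p)`. -/
def graphMapRev (C : E n →L[ℝ] E n) : E n →ₗ[ℝ] E2 n :=
  (lp2 n).symm.toLinearMap.comp (LinearMap.prod C.toLinearMap LinearMap.id)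

/-- The subspace `rge(C, I) = {(C p, p) : p ∈ ℝ^n}`. -/
def rgeCI (C : E n →L[ℝ] E n) : Submodule ℝ (E2 n) := LinearMap.range (graphMapRev C)

/-- The preimage map `F^{-1}(y)`. -/
def Finv (F : E n → Set (E n)) (y : E n) : Set (E n) := {x | y ∈ F x}

/-- Metric subregularity at `z ∈ gph F` with constant `κ`. -/
def SubregWith (F : E n → Set (E n)) (z : E2 n) (κ : ℝ) : Prop :=
  ∃ δ > (0 : ℝ), ∀ x' : E n, dist x' (fst2 z) < δ →
    EMetric.infEdist x' (Finv F (snd2 z)) ≤ ENNReal.ofReal κ * EMetric.infEdist (snd2 z) (F x')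

/-- `F` is metrically subregular at `z ∈ gph F`. -/
def SubregAt (F : E n → Set (E n)) (z : E2 n) : Prop := ∃ κ, 0 ≤ κ ∧ SubregWith F z κ

/-- The modulus of metric subregularity `subreg F(x,y)`. -/
def subregMod (F : E n → Set (E n)) (z : E2 n) : ℝ := sInf {κ | 0 ≤ κ ∧ SubregWith F z κ}

/-- `F` is strongly metrically subregular at `z ∈ gph F`. -/
def StrSubregAt (F : E n → Set (E n)) (z : E2 n) : Prop :=
  SubregAt F z ∧ ∃ δ > (0 : ℝ), ∀ x' ∈ Finv F (snd2 z), dist x' (fst2 z) < δ → x' = fst2 z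

/-- `F` is strongly metrically subregular around `zb ∈ gph F` (with finite `lsubreg`). -/
def StrSubregAround (F : E n → Set (E n)) (zb : E2 n) : Prop :=
  ∃ δ > (0 : ℝ), (∀ z ∈ gph F, dist z zb < δ → StrSubregAt F z) ∧
    ∃ c : ℝ, ∀ z ∈ gph F, dist z zb < δ → subregMod F z ≤ c

/-- `lsubreg F(x̄,ȳ)`: the limsup of `subreg F(x,y)` over graph points `(x,y) → (x̄,ȳ)`. -/
def lsubreg (F : E n → Set (E n)) (zb : E2 n) : ℝ :=
  Filter.limsup (fun z => subregMod F z) (𝓝[gph F] zb)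

/-- Metric regularity around `zb ∈ gph F` with constant `κ`. -/
def RegWith (F : E n → Set (E n)) (zb : E2 n) (κ : ℝ) : Prop :=
  ∃ δ > (0 : ℝ), ∀ x y : E n, dist x (fst2 zb) < δ → dist y (snd2 zb) < δ →
    EMetric.infEdist x (Finv F y) ≤ ENNReal.ofReal κ * EMetric.infEdist y (F x)

/-- `F` is metrically regular around `zb ∈ gph F`. -/
def MetrRegAround (F : E n → Set (E n)) (zb : E2 n) : Prop := ∃ κ, 0 ≤ κ ∧ RegWith F zb κ

/-- The modulus of metric regularity `reg F(x̄,ȳ)`. -/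
def regMod (F : E n → Set (E n)) (zb : E2 n) : ℝ := sInf {κ | 0 ≤ κ ∧ RegWith F zb κ}

/-- `F` is strongly metrically regular around `zb ∈ gph F`: metrically regular and `F⁻¹`
has a single-valued localization around `(ȳ, x̄)`. -/
def StrRegAround (F : E n → Set (E n)) (zb : E2 n) : Prop :=
  MetrRegAround F zb ∧
  ∃ (X' Y' : Set (E n)) (h : E n → E n), IsOpen X' ∧ IsOpen Y' ∧
    fst2 zb ∈ X' ∧ snd2 zb ∈ Y' ∧ h (snd2 zb) = fst2 zb ∧
    gph F ∩ {w | fst2 w ∈ X' ∧ snd2 w ∈ Y'} = {w | snd2 w ∈ Y' ∧ fst2 w = h (snd2 w)}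

/-- `F` is SCD semismooth* at `zb ∈ gph F`. -/
def SCDSemismoothAt (F : E n → Set (E n)) (zb : E2 n) : Prop :=
  SCDAround F zb ∧ ∀ ε > (0 : ℝ), ∃ δ > (0 : ℝ), ∀ z ∈ gph F, dist z zb ≤ δ →
    ∀ L ∈ SpStar F z, ∀ w : E2 n, w ∈ L →
      |⟪snd2 w, fst2 z - fst2 zb⟫_ℝ - ⟪fst2 w, snd2 z - snd2 zb⟫_ℝ| ≤ ε * ‖z - zb‖ * ‖w‖

/-- `F` is graphically Lipschitzian of dimension `n` at `zb` with transformation mapping `Φ`,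
local inverse `Ψ`, neighborhood `W`, and `K`-Lipschitz map `f : U → ℝ^n`. -/
def GraphLipWith (F : E n → Set (E n)) (zb : E2 n) (Φ Ψ : E2 n → E2 n)
    (W : Set (E2 n)) (U : Set (E n)) (f : E n → E n) (K : ℝ≥0) : Prop :=
  IsOpen W ∧ zb ∈ W ∧ ContDiffOn ℝ 1 Φ W ∧ Set.InjOn Φ W ∧ IsOpen (Φ '' W) ∧
  ContDiffOn ℝ 1 Ψ (Φ '' W) ∧ Set.LeftInvOn Ψ Φ W ∧
  IsOpen U ∧ LipschitzOnWith K f U ∧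
  Φ '' (gph F ∩ W) = {w | fst2 w ∈ U ∧ snd2 w = f (fst2 w)}

/-- `F` is graphically Lipschitzian of dimension `n` at `zb` with transformation mapping `Φ`. -/
def GraphLipAt (F : E n → Set (E n)) (zb : E2 n) (Φ : E2 n → E2 n) : Prop :=
  ∃ Ψ W U f K, GraphLipWith F zb Φ Ψ W U f K

/-- `∇̄^Φ F(x̄,ȳ)`: the `(2n)×n` matrices `Z` (as linear maps `ℝ^n → ℝ^{2n}`) with
`rge Z ∈ Sp F(x̄,ȳ)` and upper block of `∇Φ(x̄,ȳ)Z` equal to the identity. -/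
def BsubPhi (F : E n → Set (E n)) (zb : E2 n) (Φ : E2 n → E2 n) : Set (E n →L[ℝ] E2 n) :=
  {Z | LinearMap.range (Z : E n →ₗ[ℝ] E2 n) ∈ Sp F zb ∧ ∀ p, fst2 (fderiv ℝ Φ zb (Z p)) = p}

/-- A (globally) monotone set-valued map. -/
def MonoMap (T : E n → Set (E n)) : Prop :=
  ∀ x₁ y₁ x₂ y₂, y₁ ∈ T x₁ → y₂ ∈ T x₂ → 0 ≤ ⟪y₁ - y₂, x₁ - x₂⟫_ℝ

/-- `F` is locally maximally monotone at `z ∈ gph F`. -/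
def LocMaxMonoAt (F : E n → Set (E n)) (z : E2 n) : Prop :=
  ∃ X Y : Set (E n), IsOpen X ∧ IsOpen Y ∧ fst2 z ∈ X ∧ snd2 z ∈ Y ∧
    (∀ w₁ ∈ gph F ∩ {w | fst2 w ∈ X ∧ snd2 w ∈ Y},
     ∀ w₂ ∈ gph F ∩ {w | fst2 w ∈ X ∧ snd2 w ∈ Y},
       0 ≤ ⟪snd2 w₁ - snd2 w₂, fst2 w₁ - fst2 w₂⟫_ℝ) ∧
    ∀ T : E n → Set (E n), MonoMap T →
      gph F ∩ {w | fst2 w ∈ X ∧ snd2 w ∈ Y} ⊆ gph T →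
      gph F ∩ {w | fst2 w ∈ X ∧ snd2 w ∈ Y} = gph T ∩ {w | fst2 w ∈ X ∧ snd2 w ∈ Y}

/-- `F` is locally maximally hypomonotone at `z ∈ gph F`:
`γI + F` is locally maximally monotone at `(x, γx + y)` for some `γ ≥ 0`. -/
def LocMaxHypoAt (F : E n → Set (E n)) (z : E2 n) : Prop :=
  ∃ γ : ℝ, 0 ≤ γ ∧ LocMaxMonoAt (fun x => (fun y => γ • x + y) '' F x)
    (mk2 (fst2 z) (γ • fst2 z + snd2 z))

/-- A firmly nonexpansive matrix: `⟨Bv, v⟩ ≥ ‖Bv‖²` for all `v`. -/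
def FirmNonexp (B : E n →L[ℝ] E n) : Prop := ∀ v, ‖B v‖ ^ 2 ≤ ⟪B v, v⟫_ℝ

end SCD

/-!
At a point where `f` is differentiable, the tangent cone to `gph f` is `rge(I, ∇f)`. The
orthogonal projection onto `rge(I, A) = range G`, `G u = (u, A u)`, is `G (GᵀG)⁻¹ Gᵀ`, which
depends continuously on `A`; hence `rge(I, A) ∈ Sp f(x)` for every `A ∈ ∇̄f(x)`.

Conversely, let `f` be `K`-Lipschitz near `x`. Every tangent direction `(u, v)` to the graph
satisfies `‖v‖ ≤ K ‖u‖`, so an `n`-dimensional tangent cone is the graph of a linear map `B`, and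
compactness of the normalized difference quotients shows that `f` is differentiable there with
`∇f = B`. As `‖∇f‖ ≤ K`, the gradients along a sequence realizing `L ∈ Sp f(x)` have a
subsequence converging to some `A ∈ ∇̄f(x)`, and then `L = rge(I, A)`. Rademacher's theorem makes
`∇̄f` nonempty near `x`. Finally `rge(I, A)^⊥ = {(-Aᵀ q, q)}`, so `rge(I, A)* = rge(I, Aᵀ)`.
-/

section GramProjection

open ContinuousLinearMap

variable {𝕜 E F : Type*} [RCLike 𝕜]
  [NormedAddCommGroup E] [InnerProductSpace 𝕜 E] [FiniteDimensional 𝕜 E] [CompleteSpace E]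
  [NormedAddCommGroup F] [InnerProductSpace 𝕜 F] [CompleteSpace F]

theorem ContinuousLinearMap.isUnit_adjoint_comp_self {G : E →L[𝕜] F}
    (hG : Function.Injective G) : IsUnit (adjoint G ∘L G) := by
  have hinj : Function.Injective (adjoint G ∘L G) := by
    rwa [coe_comp, adjoint_comp_self_injective_iff]
  exact isUnit_iff_bijective.mpr
    ⟨hinj, LinearMap.injective_iff_surjective (f := (adjoint G ∘L G : E →ₗ[𝕜] E)).mp hinj⟩

def ContinuousLinearMap.gramProjection (G : E →L[𝕜] F) : F →L[𝕜] F :=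
  G ∘L Ring.inverse (adjoint G ∘L G) ∘L adjoint G

theorem ContinuousLinearMap.starProjection_range_eq_gramProjection {G : E →L[𝕜] F}
    (hG : Function.Injective G) : G.range.starProjection = G.gramProjection := by
  ext z
  refine Submodule.eq_starProjection_of_mem_of_inner_eq_zero (K := G.range) (u := z)
    (v := G.gramProjection z) ⟨_, rfl⟩ ?_
  rintro _ ⟨u, rfl⟩
  have hinv : (adjoint G ∘L G) ∘L Ring.inverse (adjoint G ∘L G) = 1 :=
    Ring.mul_inverse_cancel _ (isUnit_adjoint_comp_self hG)
  rw [coe_coe, inner_sub_left, ← adjoint_inner_left, ← adjoint_inner_left G, gramProjection,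
    ← comp_apply (adjoint G), ← comp_assoc, ← comp_assoc, hinv, one_def, id_comp, sub_self]

theorem ContinuousLinearMap.continuousAt_gramProjection {G : E →L[𝕜] F}
    (hG : Function.Injective G) : ContinuousAt gramProjection G := by
  have hadj : Continuous fun H : E →L[𝕜] F => adjoint H :=
    (adjoint : (E →L[𝕜] F) ≃ₗᵢ⋆[𝕜] (F →L[𝕜] E)).continuous
  obtain ⟨u, hu⟩ := isUnit_adjoint_comp_self hG
  have hinv : ContinuousAt (fun H : E →L[𝕜] F => Ring.inverse (adjoint H ∘L H)) G := by
    have hu' : ContinuousAt Ring.inverse (adjoint G ∘L G) := hu ▸ NormedRing.inverse_continuousAt u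
    exact hu'.comp (f := fun H : E →L[𝕜] F => adjoint H ∘L H)
      (hadj.clm_comp continuous_id).continuousAt
  exact continuousAt_id.clm_comp (hinv.clm_comp hadj.continuousAt)

theorem Filter.Tendsto.starProjection_range {α : Type*} {l : Filter α} {G : α → E →L[𝕜] F}
    {G₀ : E →L[𝕜] F} (h : Tendsto G l (𝓝 G₀)) (hG : ∀ a, Function.Injective (G a))
    (hG₀ : Function.Injective G₀) :
    Tendsto (fun a => (G a).range.starProjection) l
      (𝓝 G₀.range.starProjection) := by
  simp only [starProjection_range_eq_gramProjection, hG, hG₀]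
  exact (continuousAt_gramProjection hG₀).tendsto.comp h

end GramProjection

section DifferenceQuotients

variable {E F : Type*} [NormedAddCommGroup E] [NormedSpace ℝ E] [NormedAddCommGroup F]
  [NormedSpace ℝ F]

theorem Filter.Tendsto.add_smul_nhds_self {α : Type*} {l : Filter α} (x : E) {t : α → ℝ}
    {u : α → E} {p : E} (ht : Tendsto t l (𝓝 0)) (hu : Tendsto u l (𝓝 p)) :
    Tendsto (fun a => x + t a • u a) l (𝓝 x) := by
  simpa using tendsto_const_nhds.add (ht.smul hu)

theorem HasFDerivAt.tendsto_inv_smul_sub {f : E → F} {f' : E →L[ℝ] F} {x : E}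
    (hf : HasFDerivAt f f' x) {α : Type*} {l : Filter α} {t : α → ℝ} {u : α → E} {p : E}
    (hpos : ∀ a, t a ≠ 0) (ht : Tendsto t l (𝓝 0)) (hu : Tendsto u l (𝓝 p)) :
    Tendsto (fun a => (t a)⁻¹ • (f (x + t a • u a) - f x)) l (𝓝 (f' p)) := by
  refine (hasFDerivWithinAt_univ.mpr hf).lim (by simpa using ht.smul hu)
    (.of_forall fun _ => mem_univ _) ?_
  simpa only [smul_smul, inv_mul_cancel₀ (hpos _), one_smul] using hu

theorem LipschitzOnWith.norm_inv_smul_sub_le {f : E → F} {K : ℝ≥0} {s : Set E}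
    (hf : LipschitzOnWith K f s) {x u : E} {t : ℝ} (ht : 0 < t) (hx : x ∈ s)
    (hxu : x + t • u ∈ s) : ‖t⁻¹ • (f (x + t • u) - f x)‖ ≤ K * ‖u‖ := by
  rw [norm_smul, norm_inv, Real.norm_of_nonneg ht.le, inv_mul_le_iff₀ ht]
  calc ‖f (x + t • u) - f x‖ ≤ K * ‖x + t • u - x‖ := hf.norm_sub_le hxu hx
    _ = t * (K * ‖u‖) := by
      rw [add_sub_cancel_left, norm_smul, Real.norm_of_nonneg ht.le]
      ring

end DifferenceQuotients

namespace SCD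

variable {n : ℕ}

@[simp] lemma fst2_mk2 (u v : E n) : fst2 (mk2 u v) = u := rfl
@[simp] lemma snd2_mk2 (u v : E n) : snd2 (mk2 u v) = v := rfl
@[simp] lemma mk2_fst2_snd2 (z : E2 n) : mk2 (fst2 z) (snd2 z) = z := rfl

lemma inner_eq_fst2_add_snd2 (z w : E2 n) :
    ⟪z, w⟫_ℝ = ⟪fst2 z, fst2 w⟫_ℝ + ⟪snd2 z, snd2 w⟫_ℝ :=
  WithLp.prod_inner_apply _ _

lemma continuous_fst2 : Continuous (fst2 : E2 n → E n) :=
  (WithLp.prodContinuousLinearEquiv 2 ℝ (E n) (E n)).continuous.fst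

lemma continuous_snd2 : Continuous (snd2 : E2 n → E n) :=
  (WithLp.prodContinuousLinearEquiv 2 ℝ (E n) (E n)).continuous.snd

lemma continuous_mk2 : Continuous (fun p : E n × E n => mk2 p.1 p.2) :=
  (WithLp.prodContinuousLinearEquiv 2 ℝ (E n) (E n)).symm.continuous

lemma mem_gph_sv {f : E n → E n} {U : Set (E n)} {z : E2 n} :
    z ∈ gph (sv f U) ↔ fst2 z ∈ U ∧ snd2 z = f (fst2 z) := Iff.rfl

lemma mem_rgeIA_iff {A : E n →L[ℝ] E n} {w : E2 n} : w ∈ rgeIA A ↔ snd2 w = A (fst2 w) :=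
  ⟨by rintro ⟨u, rfl⟩; rfl, fun h => ⟨fst2 w, by rw [graphMap, ← mk2_fst2_snd2 w, h]; rfl⟩⟩

def graphCLM (A : E n →L[ℝ] E n) : E n →L[ℝ] E2 n :=
  (WithLp.prodContinuousLinearEquiv 2 ℝ (E n) (E n)).symm.toContinuousLinearMap ∘L
    (ContinuousLinearMap.id ℝ (E n)).prod A

lemma range_graphCLM (A : E n →L[ℝ] E n) : (graphCLM A).range = rgeIA A := rfl

lemma graphCLM_injective (A : E n →L[ℝ] E n) : Function.Injective (graphCLM A) :=
  fun _ _ h => congrArg fst2 h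

lemma continuous_graphCLM : Continuous (graphCLM (n := n)) :=
  continuous_const.clm_comp
    ((ContinuousLinearMap.prodₗᵢ ℝ).continuous.comp (continuous_const.prodMk continuous_id))

lemma finrank_rgeIA (A : E n →L[ℝ] E n) : Module.finrank ℝ (rgeIA A) = n := by
  rw [← range_graphCLM, LinearMap.finrank_range_of_inj (graphCLM_injective A),
    finrank_euclideanSpace_fin]

lemma eq_of_dZ_eq_zero {L₁ L₂ : Submodule ℝ (E2 n)} (h : dZ L₁ L₂ = 0) : L₁ = L₂ := by
  rw [← Submodule.range_starProjection L₁, ← Submodule.range_starProjection L₂]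
  exact congrArg (fun P : E2 n →L[ℝ] E2 n => P.range) (norm_sub_eq_zero_iff.mp h)

lemma tendsto_projC_rgeIA {α : Type*} {l : Filter α} {B : α → E n →L[ℝ] E n}
    {A : E n →L[ℝ] E n} (h : Tendsto B l (𝓝 A)) :
    Tendsto (fun a => projC (rgeIA (B a))) l (𝓝 (projC (rgeIA A))) :=
  ((continuous_graphCLM.tendsto A).comp h).starProjection_range
    (fun _ => graphCLM_injective _) (graphCLM_injective A)

lemma tendsto_dZ_rgeIA {α : Type*} {l : Filter α} {B : α → E n →L[ℝ] E n}
    {A : E n →L[ℝ] E n} (h : Tendsto B l (𝓝 A)) :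
    Tendsto (fun a => dZ (rgeIA (B a)) (rgeIA A)) l (𝓝 0) :=
  tendsto_iff_norm_sub_tendsto_zero.mp (tendsto_projC_rgeIA h)

lemma mem_orthogonal_rgeIA_iff {A : E n →L[ℝ] E n} {w : E2 n} :
    w ∈ (rgeIA A)ᗮ ↔ fst2 w + ContinuousLinearMap.adjoint A (snd2 w) = 0 := by
  have key : ∀ u, ⟪graphMap A u, w⟫_ℝ = ⟪u, fst2 w + ContinuousLinearMap.adjoint A (snd2 w)⟫_ℝ :=
    fun u => by
      rw [inner_eq_fst2_add_snd2, inner_add_right, ContinuousLinearMap.adjoint_inner_right A]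
      rfl
  rw [Submodule.mem_orthogonal]
  refine ⟨fun h => (inner_self_eq_zero (𝕜 := ℝ)).mp ?_, ?_⟩
  · rw [← key]
    exact h _ ⟨_, rfl⟩
  · rintro h _ ⟨u, rfl⟩
    rw [key, h, inner_zero_right]

lemma Sneg_apply (z : E2 n) : Sneg n z = mk2 (-snd2 z) (fst2 z) := rfl

lemma adjS_rgeIA (A : E n →L[ℝ] E n) :
    adjS (rgeIA A) = rgeIA (ContinuousLinearMap.adjoint A) := by
  ext z
  simp only [adjS, Submodule.mem_map, LinearEquiv.coe_coe, mem_orthogonal_rgeIA_iff,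
    mem_rgeIA_iff]
  constructor
  · rintro ⟨w, hw, rfl⟩
    rw [Sneg_apply, fst2_mk2, snd2_mk2, map_neg]
    exact eq_neg_of_add_eq_zero_left hw
  · intro hz
    refine ⟨mk2 (snd2 z) (-fst2 z), ?_, by rw [Sneg_apply]; simp⟩
    rw [fst2_mk2, snd2_mk2, map_neg, hz, add_neg_cancel]

lemma mem_tcone_of_eventually {H : Type*} [NormedAddCommGroup H] [NormedSpace ℝ H] {A : Set H}
    {z w : H} {t : ℕ → ℝ} {wk : ℕ → H} (hpos : ∀ᶠ k in atTop, 0 < t k)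
    (ht : Tendsto t atTop (𝓝 0)) (hw : Tendsto wk atTop (𝓝 w))
    (hA : ∀ᶠ k in atTop, z + t k • wk k ∈ A) : w ∈ tcone A z := by
  obtain ⟨N, hN⟩ := eventually_atTop.mp (hpos.and hA)
  exact ⟨fun k => t (k + N), fun k => wk (k + N), fun k => (hN _ le_add_self).1,
    (tendsto_add_atTop_iff_nat N).mpr ht, (tendsto_add_atTop_iff_nat N).mpr hw,
    fun k => (hN _ le_add_self).2⟩

lemma mem_tcone_gph_sv_iff {f : E n → E n} {U : Set (E n)} {x : E n} {w : E2 n} :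
    w ∈ tcone (gph (sv f U)) (mk2 x (f x)) ↔
      ∃ (t : ℕ → ℝ) (u : ℕ → E n), (∀ k, 0 < t k) ∧ Tendsto t atTop (𝓝 0) ∧
        Tendsto u atTop (𝓝 (fst2 w)) ∧ (∀ᶠ k in atTop, x + t k • u k ∈ U) ∧
        Tendsto (fun k => (t k)⁻¹ • (f (x + t k • u k) - f x)) atTop (𝓝 (snd2 w)) := by
  constructor
  · rintro ⟨t, wk, hpos, ht, hw, hA⟩
    refine ⟨t, fun k => fst2 (wk k), hpos, ht, (continuous_fst2.tendsto w).comp hw,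
      .of_forall fun k => (hA k).1, ((continuous_snd2.tendsto w).comp hw).congr fun k => ?_⟩
    have hgraph : f (x + t k • fst2 (wk k)) = f x + t k • snd2 (wk k) := (hA k).2.symm
    rw [hgraph, add_sub_cancel_left, inv_smul_smul₀ (hpos k).ne', Function.comp_apply]
  · rintro ⟨t, u, hpos, ht, hu, hU, hq⟩
    refine mem_tcone_of_eventually (.of_forall hpos) ht
      ((continuous_mk2.tendsto (fst2 w, snd2 w)).comp (hu.prodMk_nhds hq)) ?_
    filter_upwards [hU] with k hk
    refine mem_gph_sv.mpr ⟨hk, ?_⟩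
    change f x + t k • (t k)⁻¹ • (f (x + t k • u k) - f x) = f (x + t k • u k)
    rw [smul_inv_smul₀ (hpos k).ne', add_sub_cancel]

lemma tcone_gph_sv_eq_rgeIA {f : E n → E n} {U : Set (E n)} {x : E n} (hU : U ∈ 𝓝 x)
    (hf : DifferentiableAt ℝ f x) :
    tcone (gph (sv f U)) (mk2 x (f x)) = rgeIA (fderiv ℝ f x) := by
  ext w
  rw [mem_tcone_gph_sv_iff, SetLike.mem_coe, mem_rgeIA_iff]
  constructor
  · rintro ⟨t, u, hpos, ht, hu, -, hq⟩
    exact tendsto_nhds_unique hq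
      (hf.hasFDerivAt.tendsto_inv_smul_sub (fun k => (hpos k).ne') ht hu)
  · intro hw
    have ht := tendsto_one_div_add_atTop_nhds_zero_nat (𝕜 := ℝ)
    refine ⟨fun k => 1 / (k + 1), fun _ => fst2 w, fun k => by positivity, ht,
      tendsto_const_nhds, (ht.add_smul_nhds_self x tendsto_const_nhds).eventually hU, ?_⟩
    rw [hw]
    exact hf.hasFDerivAt.tendsto_inv_smul_sub (fun k => by positivity) ht tendsto_const_nhds

section Lipschitz

variable {f : E n → E n} {U s : Set (E n)} {x : E n} {K : ℝ≥0}

lemma norm_snd2_le_of_mem_tcone (hs : s ∈ 𝓝 x) (hlip : LipschitzOnWith K f s) {w : E2 n}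
    (hw : w ∈ tcone (gph (sv f U)) (mk2 x (f x))) : ‖snd2 w‖ ≤ K * ‖fst2 w‖ := by
  obtain ⟨t, u, hpos, ht, hu, -, hq⟩ := mem_tcone_gph_sv_iff.mp hw
  refine le_of_tendsto_of_tendsto hq.norm (hu.norm.const_mul _) ?_
  filter_upwards [(ht.add_smul_nhds_self x hu).eventually hs] with k hk
  exact hlip.norm_inv_smul_sub_le (hpos k) (mem_of_mem_nhds hs) hk

lemma exists_eq_rgeIA_of_finrank {L : Submodule ℝ (E2 n)} (hrk : Module.finrank ℝ L = n)
    (hL : ∀ w ∈ L, fst2 w = 0 → w = 0) : ∃ B : E n →L[ℝ] E n, L = rgeIA B := by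
  let π : L →ₗ[ℝ] E n := LinearMap.fst ℝ (E n) (E n) ∘ₗ (lp2 n).toLinearMap ∘ₗ L.subtype
  have hπ : Function.Injective π :=
    (injective_iff_map_eq_zero π).mpr fun w hw => Subtype.ext (hL w w.2 hw)
  let e := π.linearEquivOfInjective hπ (by rw [hrk, finrank_euclideanSpace_fin])
  let B := LinearMap.toContinuousLinearMap
    (LinearMap.snd ℝ (E n) (E n) ∘ₗ (lp2 n).toLinearMap ∘ₗ L.subtype ∘ₗ e.symm.toLinearMap)
  refine ⟨B, (Submodule.eq_of_le_of_finrank_eq ?_ (by rw [hrk, finrank_rgeIA])).symm⟩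
  rintro _ ⟨u, rfl⟩
  have hfst : fst2 (e.symm u : E2 n) = u := e.apply_symm_apply u
  change mk2 u (snd2 (e.symm u : E2 n)) ∈ L
  nth_rw 1 [← hfst]
  exact (e.symm u).2

lemma exists_subseq_tendsto_mem_tcone (hU : U ∈ 𝓝 x) (hs : s ∈ 𝓝 x)
    (hlip : LipschitzOnWith K f s) {h : ℕ → E n} (hh : Tendsto h atTop (𝓝 0))
    (hpos : ∀ k, 0 < ‖h k‖) :
    ∃ (φ : ℕ → ℕ) (p p' : E n), StrictMono φ ∧
      Tendsto (fun j => ‖h (φ j)‖⁻¹ • h (φ j)) atTop (𝓝 p) ∧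
      Tendsto (fun j => ‖h (φ j)‖⁻¹ • (f (x + h (φ j)) - f x)) atTop (𝓝 p') ∧
      mk2 p p' ∈ tcone (gph (sv f U)) (mk2 x (f x)) := by
  have hxu : ∀ k, x + ‖h k‖ • ‖h k‖⁻¹ • h k = x + h k := fun k => by
    rw [smul_inv_smul₀ (hpos k).ne']
  have hnear : Tendsto (fun k => x + h k) atTop (𝓝 x) := by simpa using hh.const_add x
  have hbdd : ∀ᶠ k in atTop, (‖h k‖⁻¹ • h k, ‖h k‖⁻¹ • (f (x + h k) - f x)) ∈
      closedBall (0 : E n) 1 ×ˢ closedBall (0 : E n) K := by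
    filter_upwards [hnear.eventually hs] with k hk
    have hu1 : ‖‖h k‖⁻¹ • h k‖ = 1 := by simp [norm_smul, (hpos k).ne']
    have hq := hlip.norm_inv_smul_sub_le (hpos k) (mem_of_mem_nhds hs) ((hxu k).symm ▸ hk)
    rw [hu1, mul_one, hxu] at hq
    exact ⟨by simp [hu1], mem_closedBall_zero_iff.mpr hq⟩
  obtain ⟨⟨p, p'⟩, -, φ, hφ, hlim⟩ :=
    ((isCompact_closedBall _ _).prod (isCompact_closedBall _ _)).tendsto_subseq' hbdd.frequently
  have hu : Tendsto (fun j => ‖h (φ j)‖⁻¹ • h (φ j)) atTop (𝓝 p) :=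
    (continuous_fst.tendsto _).comp hlim
  have hq : Tendsto (fun j => ‖h (φ j)‖⁻¹ • (f (x + h (φ j)) - f x)) atTop (𝓝 p') :=
    (continuous_snd.tendsto _).comp hlim
  refine ⟨φ, p, p', hφ, hu, hq, mem_tcone_gph_sv_iff.mpr ⟨fun j => ‖h (φ j)‖,
    fun j => ‖h (φ j)‖⁻¹ • h (φ j), fun j => hpos _,
    by simpa using (hh.comp hφ.tendsto_atTop).norm, hu, ?_, hq.congr fun j => by rw [hxu]⟩⟩
  exact (hφ.tendsto_atTop.eventually (hnear.eventually hU)).mono fun j hj => by rwa [hxu]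

lemma hasFDerivAt_of_tcone_subset_rgeIA (hU : U ∈ 𝓝 x) (hs : s ∈ 𝓝 x)
    (hlip : LipschitzOnWith K f s) {B : E n →L[ℝ] E n}
    (hB : tcone (gph (sv f U)) (mk2 x (f x)) ⊆ rgeIA B) : HasFDerivAt f B x := by
  rw [hasFDerivAt_iff_isLittleO_nhds_zero, Asymptotics.isLittleO_iff]
  intro c hc
  by_contra hcon
  obtain ⟨h, hh, hbad⟩ := exists_seq_forall_of_frequently (not_eventually.mp hcon)
  have hpos : ∀ k, 0 < ‖h k‖ := fun k => norm_pos_iff.mpr fun h0 => hbad k (by simp [h0])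
  obtain ⟨φ, p, p', hφ, hu, hq, hw⟩ := exists_subseq_tendsto_mem_tcone hU hs hlip hh hpos
  have hp' : p' = B p := mem_rgeIA_iff.mp (hB hw)
  have hgap : ∀ k, c ≤ ‖‖h k‖⁻¹ • (f (x + h k) - f x) - B (‖h k‖⁻¹ • h k)‖ := fun k => by
    rw [map_smul, ← smul_sub, norm_smul, norm_inv, norm_norm, le_inv_mul_iff₀ (hpos k),
      mul_comm]
    exact (not_le.mp (hbad k)).le
  have hlim := (hq.sub ((B.continuous.tendsto p).comp hu)).norm
  rw [hp', sub_self, norm_zero] at hlim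
  exact hc.not_ge (ge_of_tendsto hlim (.of_forall fun j => hgap (φ j)))

lemma differentiableAt_and_eq_rgeIA_of_tcone (hU : U ∈ 𝓝 x) (hs : s ∈ 𝓝 x)
    (hlip : LipschitzOnWith K f s) {L : Submodule ℝ (E2 n)} (hrk : Module.finrank ℝ L = n)
    (hL : (L : Set (E2 n)) = tcone (gph (sv f U)) (mk2 x (f x))) :
    DifferentiableAt ℝ f x ∧ L = rgeIA (fderiv ℝ f x) := by
  obtain ⟨B, rfl⟩ := exists_eq_rgeIA_of_finrank hrk fun w hw hw0 => by
    have hsnd := norm_snd2_le_of_mem_tcone hs hlip (hL.subset hw)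
    rw [hw0, norm_zero, mul_zero, norm_le_zero_iff] at hsnd
    rw [← mk2_fst2_snd2 w, hw0, hsnd]
    rfl
  have hf := hasFDerivAt_of_tcone_subset_rgeIA hU hs hlip hL.symm.subset
  exact ⟨hf.differentiableAt, by rw [hf.fderiv]⟩

end Lipschitz

section Sp

variable {f : E n → E n} {U s : Set (E n)} {x : E n} {K : ℝ≥0}

lemma rgeIA_mem_Sp (hU : IsOpen U) (hf : ContinuousAt f x) {A : E n →L[ℝ] E n}
    (hA : A ∈ Bsub f U x) : rgeIA A ∈ Sp (sv f U) (mk2 x (f x)) := by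
  obtain ⟨xk, hk, hxk, hfd⟩ := hA
  exact ⟨finrank_rgeIA A, fun k => mk2 (xk k) (f (xk k)), fun k => rgeIA (fderiv ℝ f (xk k)),
    fun k => ⟨⟨(hk k).1, rfl⟩, finrank_rgeIA _,
      (tcone_gph_sv_eq_rgeIA (hU.mem_nhds (hk k).1) (hk k).2).symm⟩,
    (continuous_mk2.tendsto _).comp (hxk.prodMk_nhds (hf.tendsto.comp hxk)),
    tendsto_dZ_rgeIA hfd⟩

lemma mem_Bsub_of_eventually {xk : ℕ → E n} {A : E n →L[ℝ] E n}
    (h : ∀ᶠ k in atTop, xk k ∈ U ∧ DifferentiableAt ℝ f (xk k)) (hx : Tendsto xk atTop (𝓝 x))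
    (hA : Tendsto (fun k => fderiv ℝ f (xk k)) atTop (𝓝 A)) : A ∈ Bsub f U x := by
  obtain ⟨N, hN⟩ := eventually_atTop.mp h
  exact ⟨fun k => xk (k + N), fun k => hN _ le_add_self, (tendsto_add_atTop_iff_nat N).mpr hx,
    (tendsto_add_atTop_iff_nat N).mpr hA⟩

lemma mem_closure_setOf_differentiableAt {V : Set (E n)} (hV : IsOpen V) (hx : x ∈ V)
    (hlip : LipschitzOnWith K f V) : x ∈ closure {y | y ∈ V ∧ DifferentiableAt ℝ f y} := by
  have hae := hlip.ae_differentiableWithinAt (μ := MeasureTheory.volume) hV.measurableSet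
  refine Metric.mem_closure_iff.mpr fun ε hε => ?_
  have hW : MeasureTheory.volume (V ∩ ball x ε) ≠ 0 :=
    (hV.inter isOpen_ball).measure_ne_zero _ ⟨x, hx, mem_ball_self hε⟩
  obtain ⟨y, ⟨hyV, hyx⟩, hy⟩ := MeasureTheory.Measure.exists_mem_of_measure_ne_zero_of_ae hW
    (MeasureTheory.ae_restrict_of_ae_restrict_of_subset inter_subset_left hae)
  exact ⟨y, ⟨hyV, hy.differentiableAt (hV.mem_nhds hyV)⟩, mem_ball'.mp hyx⟩

lemma Bsub_nonempty (hU : U ∈ 𝓝 x) (hs : s ∈ 𝓝 x) (hlip : LipschitzOnWith K f s) :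
    (Bsub f U x).Nonempty := by
  have hxV : x ∈ interior (U ∩ s) := mem_interior_iff_mem_nhds.mpr (inter_mem hU hs)
  obtain ⟨xk, hxkV, hxk⟩ := mem_closure_iff_seq_limit.mp <|
    mem_closure_setOf_differentiableAt isOpen_interior hxV
      (hlip.mono (interior_subset.trans inter_subset_right))
  have hbdd : ∀ k, fderiv ℝ f (xk k) ∈ closedBall (0 : E n →L[ℝ] E n) K := fun k =>
    mem_closedBall_zero_iff.mpr <| norm_fderiv_le_of_lipschitzOn ℝ
      (mem_of_superset (isOpen_interior.mem_nhds (hxkV k).1)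
        (interior_subset.trans inter_subset_right)) hlip
  obtain ⟨A, -, φ, hφ, hA⟩ := (isCompact_closedBall _ _).tendsto_subseq hbdd
  exact ⟨A, xk ∘ φ, fun k => ⟨(interior_subset (hxkV _).1).1, (hxkV _).2⟩,
    hxk.comp hφ.tendsto_atTop, hA⟩

lemma Sp_nonempty (hU : IsOpen U) (hx : x ∈ U) (hs : s ∈ 𝓝 x)
    (hlip : LipschitzOnWith K f s) : (Sp (sv f U) (mk2 x (f x))).Nonempty :=
  (Bsub_nonempty (hU.mem_nhds hx) hs hlip).image rgeIA |>.mono <| by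
    rintro _ ⟨A, hA, rfl⟩
    exact rgeIA_mem_Sp hU (hlip.continuousOn.continuousAt hs) hA

lemma Sp_subset_rgeIA_Bsub (hU : IsOpen U) (hs : s ∈ 𝓝 x) (hlip : LipschitzOnWith K f s) :
    Sp (sv f U) (mk2 x (f x)) ⊆ {L | ∃ A ∈ Bsub f U x, L = rgeIA A} := by
  rintro L ⟨-, zk, Lk, hk, hz, hL⟩
  set xk := fun k => fst2 (zk k)
  have hzk : ∀ k, zk k = mk2 (xk k) (f (xk k)) := fun k => by
    rw [← (hk k).1.2]
    rfl
  have hxk : Tendsto xk atTop (𝓝 x) := (continuous_fst2.tendsto _).comp hz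
  have hs' : ∀ᶠ k in atTop, s ∈ 𝓝 (xk k) := hxk.eventually (eventually_eventually_nhds.mpr hs)
  have hsmooth : ∀ᶠ k in atTop, DifferentiableAt ℝ f (xk k) ∧ Lk k = rgeIA (fderiv ℝ f (xk k)) :=
    hs'.mono fun k hsk => differentiableAt_and_eq_rgeIA_of_tcone (hU.mem_nhds (hk k).1.1) hsk
      hlip (hk k).2.1 (by rw [← hzk k]; exact (hk k).2.2)
  have hbdd : ∀ᶠ k in atTop, fderiv ℝ f (xk k) ∈ closedBall (0 : E n →L[ℝ] E n) K :=
    hs'.mono fun k hsk => mem_closedBall_zero_iff.mpr (norm_fderiv_le_of_lipschitzOn ℝ hsk hlip)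
  obtain ⟨A, -, φ, hφ, hA⟩ := (isCompact_closedBall _ _).tendsto_subseq' hbdd.frequently
  have hsmoothφ := hφ.tendsto_atTop.eventually hsmooth
  have hAφ : Tendsto (fun j => projC (Lk (φ j))) atTop (𝓝 (projC (rgeIA A))) :=
    (tendsto_projC_rgeIA hA).congr' <|
      hsmoothφ.mono fun j hj => by simp only [Function.comp_apply, hj.2]
  have hdZ : Tendsto (fun j => dZ (Lk (φ j)) L) atTop (𝓝 (dZ (rgeIA A) L)) :=
    (hAφ.sub_const _).norm
  exact ⟨A, mem_Bsub_of_eventually (hsmoothφ.mono fun j hj => ⟨(hk _).1.1, hj.1⟩)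
    (hxk.comp hφ.tendsto_atTop) hA,
    (eq_of_dZ_eq_zero (tendsto_nhds_unique hdZ (hL.comp hφ.tendsto_atTop))).symm⟩

lemma SCDAround_of_lipschitzOnWith (hU : IsOpen U) (hs : IsOpen s) (hx : x ∈ s) (hsU : s ⊆ U)
    (hlip : LipschitzOnWith K f s) : SCDAround (sv f U) (mk2 x (f x)) := by
  obtain ⟨δ, hδ, hball⟩ := Metric.mem_nhds_iff.mp <|
    (continuous_fst2.tendsto (mk2 x (f x))).eventually (hs.mem_nhds hx)
  refine ⟨δ, hδ, fun z hz hzx => ?_⟩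
  have hzs : fst2 z ∈ s := hball hzx
  rw [SCDAt, ← mk2_fst2_snd2 z, hz.2]
  exact Sp_nonempty hU (hsU hzs) (hs.mem_nhds hzs) hlip

end Sp

theorem stmt6 (n : ℕ) (U : Set (E n)) (hU : IsOpen U) (f : E n → E n) (x : E n) (hx : x ∈ U)
    (hcont : ContinuousOn f U) :
    ({L | ∃ A ∈ Bsub f U x, L = rgeIA A} ⊆ Sp (sv f U) (mk2 x (f x))) ∧
    ({L | ∃ A ∈ Bsub f U x, L = rgeIA (ContinuousLinearMap.adjoint A)} ⊆
        SpStar (sv f U) (mk2 x (f x))) ∧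
    (∀ (K : ℝ≥0) (ρ : ℝ), 0 < ρ → Metric.ball x ρ ⊆ U → LipschitzOnWith K f (Metric.ball x ρ) →
      Sp (sv f U) (mk2 x (f x)) = {L | ∃ A ∈ Bsub f U x, L = rgeIA A} ∧
      SpStar (sv f U) (mk2 x (f x)) =
        {L | ∃ A ∈ Bsub f U x, L = rgeIA (ContinuousLinearMap.adjoint A)} ∧
      (Sp (sv f U) (mk2 x (f x))).Nonempty ∧
      SCDAround (sv f U) (mk2 x (f x))) := by
  have hSp : {L | ∃ A ∈ Bsub f U x, L = rgeIA A} ⊆ Sp (sv f U) (mk2 x (f x)) := by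
    rintro _ ⟨A, hA, rfl⟩
    exact rgeIA_mem_Sp hU (hcont.continuousAt (hU.mem_nhds hx)) hA
  have hSpStar : {L | ∃ A ∈ Bsub f U x, L = rgeIA (ContinuousLinearMap.adjoint A)} ⊆
      SpStar (sv f U) (mk2 x (f x)) := by
    rintro _ ⟨A, hA, rfl⟩
    exact ⟨rgeIA A, hSp ⟨A, hA, rfl⟩, (adjS_rgeIA A).symm⟩
  refine ⟨hSp, hSpStar, fun K ρ hρ hball hlip => ?_⟩
  have hsub := Sp_subset_rgeIA_Bsub hU (ball_mem_nhds x hρ) hlip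
  refine ⟨hsub.antisymm hSp, hSpStar.antisymm' ?_, Sp_nonempty hU hx (ball_mem_nhds x hρ) hlip,
    SCDAround_of_lipschitzOnWith hU isOpen_ball (mem_ball_self hρ) hball hlip⟩
  rintro _ ⟨L, hL, rfl⟩
  obtain ⟨A, hA, rfl⟩ := hsub hL
  exact ⟨A, hA, adjS_rgeIA A⟩

end SCD
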